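/- If families (i_m), (k_m) of complex numbers and γ ∈ ℤ satisfy 2(m−n)·k_{m+n} = i_m + (m−n−γ)·k_n for all m, n ∈ ℤ, then i_0 = 0 and k_n = 0 for all n ∈ ℤ. -/

import Mathlib

/-!
Specialising the relation at `(0, n)`, `(n, n)` and `(n, 0)` gives
`i₀ = (γ - n) kₙ`, `iₙ = γ kₙ` and `2n kₙ = iₙ + (n - γ) k₀`, which combine to `n kₙ = n k₀`.
Hence `k₁ = k₀`, and comparing `i₀ = γ k₀` with `i₀ = (γ - 1) k₁` gives `k₀ = 0`;
then `n kₙ = 0` forces `kₙ = 0` in characteristic zero, and `i₀ = γ k₀ = 0`.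
-/

def HalfDerivationRelation {R : Type*} [CommRing R] (i k : ℤ → R) (γ : ℤ) : Prop :=
  ∀ m n : ℤ, 2 * ((m - n : ℤ) : R) * k (m + n) = i m + ((m - n - γ : ℤ) : R) * k n

namespace HalfDerivationRelation

variable {R : Type*} [CommRing R] {i k : ℤ → R} {γ : ℤ}

theorem i_zero_eq (h : HalfDerivationRelation i k γ) (n : ℤ) :
    i 0 = ((γ - n : ℤ) : R) * k n := by
  have e := h 0 n
  push_cast at e ⊢
  simp only [zero_add] at e
  linear_combination -e

theorem i_eq (h : HalfDerivationRelation i k γ) (n : ℤ) : i n = γ * k n := by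
  have e := h n n
  push_cast at e
  simp only [sub_self, mul_zero, zero_mul, zero_sub] at e
  linear_combination -e

theorem intCast_mul_k_eq (h : HalfDerivationRelation i k γ) (n : ℤ) :
    (n : R) * k n = n * k 0 := by
  have e := h n 0
  have h₀ := h.i_zero_eq n
  have h₀' := h.i_zero_eq 0
  push_cast at e h₀ h₀'
  simp only [add_zero, sub_zero] at e h₀'
  linear_combination e + h.i_eq n + h₀' - h₀

theorem k_zero (h : HalfDerivationRelation i k γ) : k 0 = 0 := by
  have hk₁ : k 1 = k 0 := by simpa using h.intCast_mul_k_eq 1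
  have h₀ := h.i_zero_eq 0
  have h₁ := h.i_zero_eq 1
  push_cast at h₀ h₁
  linear_combination h₁ - h₀ + ((γ : R) - 1) * hk₁

theorem i_zero (h : HalfDerivationRelation i k γ) : i 0 = 0 := by
  simp [h.i_zero_eq 0, h.k_zero]

theorem k_eq_zero [IsDomain R] [CharZero R] (h : HalfDerivationRelation i k γ) (n : ℤ) :
    k n = 0 := by
  rcases eq_or_ne n 0 with rfl | hn
  · exact h.k_zero
  · have key : (n : R) * k n = 0 := by rw [h.intCast_mul_k_eq n, h.k_zero, mul_zero]
    exact (mul_eq_zero.mp key).resolve_left (Int.cast_ne_zero.mpr hn)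

end HalfDerivationRelation

theorem half_derivation_coeff_ik
    (i k : ℤ → ℂ) (γ : ℤ)
    (h : ∀ m n : ℤ, 2 * ((m - n : ℤ) : ℂ) * k (m + n)
        = i m + ((m - n - γ : ℤ) : ℂ) * k n) :
    i 0 = 0 ∧ ∀ n : ℤ, k n = 0 :=
  ⟨HalfDerivationRelation.i_zero h, HalfDerivationRelation.k_eq_zero h⟩
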